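/- arXiv:1808.05851 — 7 statements merged into one kernel-verified Lean document; each statement's English description precedes it below -/
import Mathlib

section
/- Let p be a prime number and let Λ be an even, nondegenerate, p-primary lattice of rank at least 3 which contains the hyperbolic plane U as an orthogonal direct summand. Let c₁ ∈ Λ be a primitive element and let r be a nonzero integer such that either p does not divide r, or there exists y ∈ Λ with p ∤ B(c₁, y). Then there exists a primitive element x ∈ Λ with B(x, x) = 0 and gcd(r, B(c₁, x)) = 1. (This is the lattice-theoretic core of Theorem 4.9, establishing the existence of the required elliptic fibration class on a supersingular K3 surface.) -/
/-!
Write `Λ = U ⊕ Λ'`, `β = B(c₁, f₁)`, `α = B(c₁, f₂)`. For `z ∈ Λ'` with `B(z, z) = 2s ≠ 0` and a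
factorisation `-s = ab` with `a`, `b` coprime, `x = a f₁ + b f₂ + z` is primitive (as
`B(x, f₂) = a`, `B(x, f₁) = b`) and isotropic, with `B(c₁, x) = aβ + bα + B(c₁, z)`.

A prime `q ∣ r` dividing both `α` and `β` cannot divide all of `B(c₁, Λ')` (by `p`-primarity,
primitivity of `c₁`, or the hypothesis on `p`), so it does not divide the generator of that
ideal, and `z` is taken to be a vector realising this generator, multiplied by the part of `r`
prime to these `q`. Every other prime of `r` then divides `z`, hence `s` and `B(c₁, z)`, and
putting into `a` exactly the primes of `s` that divide `β` makes `aβ + bα` prime to it. Adding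
`t w₀` with `r ∣ t` and `B(w₀, w₀) ≠ 0` preserves all this and makes `B(z, z) ≠ 0` for one of
`t = 0, r, 2r`.
-/

open Module Submodule

theorem Int.exists_mul_eq_split_primes (P : ℕ → Prop) {s : ℤ} (hs : s ≠ 0) :
    ∃ a b : ℤ, a * b = s ∧ (∀ q : ℕ, q.Prime → (q : ℤ) ∣ a → P q) ∧
      ∀ q : ℕ, q.Prime → (q : ℤ) ∣ b → ¬ P q := by
  induction hn : s.natAbs using Nat.strong_induction_on generalizing s with
  | _ n ih =>
  by_cases h : ∃ q : ℕ, q.Prime ∧ P q ∧ (q : ℤ) ∣ s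
  · obtain ⟨q, hq, hPq, s', rfl⟩ := h
    have hs' : s' ≠ 0 := right_ne_zero_of_mul hs
    have hlt : s'.natAbs < n := by
      rw [← hn, Int.natAbs_mul, Int.natAbs_natCast]
      exact lt_mul_left (Int.natAbs_pos.mpr hs') hq.one_lt
    obtain ⟨a, b, rfl, ha, hb⟩ := ih _ hlt hs' rfl
    refine ⟨q * a, b, mul_assoc _ _ _, fun q' hq' hdvd => ?_, hb⟩
    rcases Int.Prime.dvd_mul' hq' hdvd with h | h
    · rwa [(Nat.prime_dvd_prime_iff_eq hq' hq).mp (Int.natCast_dvd_natCast.mp h)]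
    · exact ha q' hq' h
  · push Not at h
    exact ⟨1, s, one_mul s, fun q hq hdvd => absurd hdvd (Nat.prime_iff_prime_int.mp hq).not_dvd_one,
      fun q hq hdvd hPq => h q hq hPq hdvd⟩

theorem Int.gcd_eq_one_of_forall_prime {m n : ℤ}
    (h : ∀ q : ℕ, q.Prime → (q : ℤ) ∣ m → ¬ (q : ℤ) ∣ n) : Int.gcd m n = 1 :=
  Nat.coprime_of_dvd fun q hq hqm hqn => h q hq (Int.natCast_dvd.mpr hqm) (Int.natCast_dvd.mpr hqn)

theorem Int.Prime.not_dvd_mul_add_mul {q : ℕ} (hq : q.Prime) {a b β α : ℤ}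
    (hβα : ¬ ((q : ℤ) ∣ β ∧ (q : ℤ) ∣ α)) (ha : (q : ℤ) ∣ a → (q : ℤ) ∣ β)
    (hb : (q : ℤ) ∣ b → ¬ (q : ℤ) ∣ β) (hab : (q : ℤ) ∣ a * b) : ¬ (q : ℤ) ∣ a * β + b * α := by
  intro h
  by_cases hβ : (q : ℤ) ∣ β
  · rcases Int.Prime.dvd_mul' hq ((dvd_add_right (hβ.mul_left a)).mp h) with hqb | hqα
    exacts [hb hqb hβ, hβα ⟨hβ, hqα⟩]
  · have hqb : (q : ℤ) ∣ b := (Int.Prime.dvd_mul' hq hab).resolve_left (mt ha hβ)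
    rcases Int.Prime.dvd_mul' hq ((dvd_add_left (hqb.mul_right α)).mp h) with hqa | hqβ
    exacts [hβ (ha hqa), hβ hqβ]

theorem LinearMap.exists_mem_forall_apply_dvd {R M : Type*} [CommRing R] [IsPrincipalIdealRing R]
    [AddCommGroup M] [Module R M] (γ : M →ₗ[R] R) (N : Submodule R M) :
    ∃ z ∈ N, ∀ w ∈ N, γ z ∣ γ w := by
  obtain ⟨z, hz, hgen⟩ := Submodule.mem_map.mp (IsPrincipal.generator_mem (N.map γ))
  refine ⟨z, hz, fun w hw => ?_⟩
  rw [hgen, ← IsPrincipal.mem_iff_generator_dvd]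
  exact mem_map_of_mem hw

theorem exists_dvd_and_apply_add_smul_self_ne_zero {M : Type*} [AddCommGroup M] [Module ℤ M]
    (B : M →ₗ[ℤ] M →ₗ[ℤ] ℤ) (u : M) {w : M} (hw : B w w ≠ 0) {r : ℤ} (hr : r ≠ 0) :
    ∃ t : ℤ, r ∣ t ∧ B (u + t • w) (u + t • w) ≠ 0 := by
  have expand (t : ℤ) :
      B (u + t • w) (u + t • w) = B u u + t * (B u w + B w u) + t ^ 2 * B w w := by
    simp only [map_add, map_zsmul, LinearMap.add_apply, LinearMap.smul_apply, smul_eq_mul]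
    ring
  by_contra! h
  have h₀ := h 0 (dvd_zero r)
  have h₁ := h r dvd_rfl
  have h₂ := h (2 * r) (dvd_mul_left r 2)
  rw [expand] at h₀ h₁ h₂
  exact mul_ne_zero (pow_ne_zero 2 hr) hw (by linarith)

theorem exists_mem_apply_self_ne_zero_and_prime_dvd {M : Type*} [AddCommGroup M] [Module ℤ M]
    (B : M →ₗ[ℤ] M →ₗ[ℤ] ℤ) (γ : M →ₗ[ℤ] ℤ) {N : Submodule ℤ M} {w₀ : M} (hw₀N : w₀ ∈ N)
    (hw₀ : B w₀ w₀ ≠ 0) {r : ℤ} (hr : r ≠ 0) (C : ℕ → Prop)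
    (hC : ∀ q : ℕ, q.Prime → (q : ℤ) ∣ r → C q → ∃ w ∈ N, ¬ (q : ℤ) ∣ γ w) :
    ∃ z ∈ N, B z z ≠ 0 ∧ ∀ q : ℕ, q.Prime → (q : ℤ) ∣ r →
      (C q → ¬ (q : ℤ) ∣ γ z) ∧ (¬ C q → ∃ w, z = (q : ℤ) • w) := by
  obtain ⟨z₁, hz₁N, hz₁⟩ := γ.exists_mem_forall_apply_dvd N
  obtain ⟨a, m, rfl, ha, hm⟩ := Int.exists_mul_eq_split_primes C hr
  obtain ⟨t, ⟨k, rfl⟩, ht⟩ := exists_dvd_and_apply_add_smul_self_ne_zero B (m • z₁) hw₀ hr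
  refine ⟨m • z₁ + (a * m * k) • w₀, add_mem (zsmul_mem hz₁N _) (zsmul_mem hw₀N _), ht,
    fun q hq hqr => ⟨fun hCq hqz => ?_, fun hCq => ?_⟩⟩
  · obtain ⟨w, hwN, hqw⟩ := hC q hq hqr hCq
    have hqm : (q : ℤ) ∣ m * γ z₁ := by
      have := dvd_sub hqz ((hqr.mul_right k).mul_right (γ w₀))
      simpa only [map_add, map_zsmul, smul_eq_mul, add_sub_cancel_right] using this
    rcases Int.Prime.dvd_mul' hq hqm with h | h
    · exact hm q hq h hCq
    · exact hqw (h.trans (hz₁ w hwN))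
  · obtain ⟨m', rfl⟩ :=
      (Int.Prime.dvd_mul' hq hqr).resolve_left fun h => hCq (ha q hq h)
    exact ⟨m' • z₁ + (a * m' * k) • w₀, by rw [zsmul_add, ← mul_zsmul, ← mul_zsmul]; ring_nf⟩

section HyperbolicSummand

variable {Λ : Type*} [AddCommGroup Λ] [Module ℤ Λ] {f₁ f₂ : Λ} {N : Submodule ℤ Λ}

theorem exists_eq_smul_add_smul_add_mem (hspan : span ℤ {f₁, f₂} ⊔ N = ⊤) (y : Λ) :
    ∃ a b : ℤ, ∃ w ∈ N, y = a • f₁ + b • f₂ + w := by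
  obtain ⟨u, hu, w, hw, rfl⟩ := mem_sup.mp (hspan ▸ mem_top : y ∈ span ℤ {f₁, f₂} ⊔ N)
  obtain ⟨a, b, rfl⟩ := mem_span_pair.mp hu
  exact ⟨a, b, w, hw, by congr 2 <;> exact int_smul_eq_zsmul _ _ _⟩

theorem ne_bot_of_span_pair_sup_eq_top (hspan : span ℤ {f₁, f₂} ⊔ N = ⊤)
    (hrank : 3 ≤ finrank ℤ Λ) : N ≠ ⊥ := by
  classical
  rintro rfl
  rw [sup_bot_eq] at hspan
  have hle := finrank_span_finset_le_card (R := ℤ) ({f₁, f₂} : Finset Λ)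
  rw [Finset.coe_pair, Set.finrank, hspan, finrank_top] at hle
  have := Finset.card_le_two (a := f₁) (b := f₂)
  omega

theorem exists_mem_not_dvd_apply (hspan : span ℤ {f₁, f₂} ⊔ N = ⊤) (γ : Λ →ₗ[ℤ] ℤ) {d : ℤ}
    (h₁ : d ∣ γ f₁) (h₂ : d ∣ γ f₂) {y : Λ} (hy : ¬ d ∣ γ y) : ∃ w ∈ N, ¬ d ∣ γ w := by
  obtain ⟨a, b, w, hw, rfl⟩ := exists_eq_smul_add_smul_add_mem hspan y
  refine ⟨w, hw, fun hw' => hy ?_⟩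
  simp only [map_add, map_zsmul, smul_eq_mul]
  exact dvd_add (dvd_add (h₁.mul_left a) (h₂.mul_left b)) hw'

variable {B : Λ →ₗ[ℤ] Λ →ₗ[ℤ] ℤ}

theorem exists_mem_apply_self_ne_zero (hsymm : ∀ x y, B x y = B y x)
    (hnondeg : ∀ x, (∀ y, B x y = 0) → x = 0) (hspan : span ℤ {f₁, f₂} ⊔ N = ⊤)
    (horth : ∀ x ∈ N, B f₁ x = 0 ∧ B f₂ x = 0) (hN : N ≠ ⊥) : ∃ w ∈ N, B w w ≠ 0 := by
  obtain ⟨z, hzN, hz⟩ := (Submodule.ne_bot_iff N).mp hN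
  by_contra! hiso
  have hz_orth (v : Λ) (hv : v ∈ N) : B z v = 0 := by
    have := hiso (z + v) (add_mem hzN hv)
    simp only [map_add, LinearMap.add_apply, hiso z hzN, hiso v hv, hsymm v z] at this
    omega
  refine hz (hnondeg z fun y => ?_)
  obtain ⟨a, b, v, hv, rfl⟩ := exists_eq_smul_add_smul_add_mem hspan y
  simp [hsymm z f₁, hsymm z f₂, (horth z hzN).1, (horth z hzN).2, hz_orth v hv]

theorem exists_primitive_isotropic_gcd_apply_eq_one (hsymm : ∀ x y, B x y = B y x)
    (heven : ∀ x, (2 : ℤ) ∣ B x x) (hf₁ : B f₁ f₁ = 0) (hf₂ : B f₂ f₂ = 0) (hf₁f₂ : B f₁ f₂ = 1)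
    (horth : ∀ x ∈ N, B f₁ x = 0 ∧ B f₂ x = 0) {c : Λ} {r : ℤ} {z : Λ} (hzN : z ∈ N)
    (hz : B z z ≠ 0) (hzr : ∀ q : ℕ, q.Prime → (q : ℤ) ∣ r →
      ((q : ℤ) ∣ B c f₁ ∧ (q : ℤ) ∣ B c f₂ → ¬ (q : ℤ) ∣ B c z) ∧
      (¬ ((q : ℤ) ∣ B c f₁ ∧ (q : ℤ) ∣ B c f₂) → ∃ w, z = (q : ℤ) • w)) :
    ∃ x : Λ, (∀ q : ℕ, q.Prime → ¬ ∃ y : Λ, x = (q : ℤ) • y) ∧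
      B x x = 0 ∧ Int.gcd r (B c x) = 1 := by
  obtain ⟨s, hs⟩ := heven z
  have hs0 : -s ≠ 0 := neg_ne_zero.mpr fun h => hz (by rw [hs, h, mul_zero])
  obtain ⟨a, b, hab, ha, hb⟩ := Int.exists_mul_eq_split_primes (fun q => (q : ℤ) ∣ B c f₁) hs0
  have hzf₁ : B z f₁ = 0 := hsymm z f₁ ▸ (horth z hzN).1
  have hzf₂ : B z f₂ = 0 := hsymm z f₂ ▸ (horth z hzN).2
  have hxf₁ : B (a • f₁ + b • f₂ + z) f₁ = b := by simp [hf₁, hsymm f₂ f₁, hf₁f₂, hzf₁]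
  have hxf₂ : B (a • f₁ + b • f₂ + z) f₂ = a := by simp [hf₂, hf₁f₂, hzf₂]
  refine ⟨a • f₁ + b • f₂ + z, ?primitive, ?isotropic, ?coprime⟩
  case primitive =>
    rintro q hq ⟨y, hy⟩
    have hqa : (q : ℤ) ∣ a := ⟨B y f₂, by rw [← hxf₂, hy, map_zsmul]; rfl⟩
    have hqb : (q : ℤ) ∣ b := ⟨B y f₁, by rw [← hxf₁, hy, map_zsmul]; rfl⟩
    exact hb q hq hqb (ha q hq hqa)
  case isotropic =>
    simp only [map_add, map_zsmul, LinearMap.add_apply, LinearMap.smul_apply, smul_eq_mul, hf₁,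
      hf₂, hf₁f₂, hsymm f₂ f₁, (horth z hzN).1, (horth z hzN).2, hzf₁, hzf₂]
    linear_combination 2 * hab + hs
  case coprime =>
    refine Int.gcd_eq_one_of_forall_prime fun q hq hqr hqx => ?_
    have hx : B c (a • f₁ + b • f₂ + z) = a * B c f₁ + b * B c f₂ + B c z := by simp
    rw [hx] at hqx
    by_cases hC : (q : ℤ) ∣ B c f₁ ∧ (q : ℤ) ∣ B c f₂
    · refine (hzr q hq hqr).1 hC ?_
      exact (dvd_add_right (dvd_add (hC.1.mul_left a) (hC.2.mul_left b))).mp hqx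
    obtain ⟨w, rfl⟩ := (hzr q hq hqr).2 hC
    have hqab : (q : ℤ) ∣ a * B c f₁ + b * B c f₂ :=
      (dvd_add_left ⟨B c w, map_zsmul _ _ _⟩).mp hqx
    have hqs : (q : ℤ) ∣ a * b := by
      obtain ⟨t, ht⟩ := heven w
      simp only [map_zsmul, LinearMap.smul_apply, smul_eq_mul, ht] at hs
      exact hab ▸ (dvd_neg.mpr ⟨q * t, by linarith⟩)
    exact Int.Prime.not_dvd_mul_add_mul hq hC (ha q hq) (hb q hq) hqs hqab

end HyperbolicSummand

theorem stmt_0_general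
    (p : ℕ)
    (Λ : Type*) [AddCommGroup Λ] [Module ℤ Λ]
    (B : Λ →ₗ[ℤ] Λ →ₗ[ℤ] ℤ)
    (hB_symm : ∀ x y : Λ, B x y = B y x)
    (hB_even : ∀ x : Λ, (2 : ℤ) ∣ B x x)
    (hB_nondeg : ∀ x : Λ, (∀ y : Λ, B x y = 0) → x = 0)
    (hrank : 3 ≤ Module.finrank ℤ Λ)
    (hprimary : ∀ q : ℕ, q.Prime → q ≠ p →
      ∀ x : Λ, (∀ y : Λ, (q : ℤ) ∣ B x y) → ∃ z : Λ, x = (q : ℤ) • z)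
    (f₁ f₂ : Λ) (Λ' : Submodule ℤ Λ)
    (hf₁ : B f₁ f₁ = 0) (hf₂ : B f₂ f₂ = 0) (hf₁f₂ : B f₁ f₂ = 1)
    (horth : ∀ x ∈ Λ', B f₁ x = 0 ∧ B f₂ x = 0)
    (hcompl : IsCompl (Submodule.span ℤ ({f₁, f₂} : Set Λ)) Λ')
    (c₁ : Λ) (hc₁ : ∀ q : ℕ, q.Prime → ¬ ∃ y : Λ, c₁ = (q : ℤ) • y)
    (r : ℤ) (hr : r ≠ 0)
    (hcop : ¬ (p : ℤ) ∣ r ∨ ∃ y : Λ, ¬ (p : ℤ) ∣ B c₁ y) :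
    ∃ x : Λ, (∀ q : ℕ, q.Prime → ¬ ∃ y : Λ, x = (q : ℤ) • y) ∧
      B x x = 0 ∧ Int.gcd r (B c₁ x) = 1 := by
  have hspan := codisjoint_iff.mp hcompl.codisjoint
  obtain ⟨w₀, hw₀N, hw₀⟩ := exists_mem_apply_self_ne_zero hB_symm hB_nondeg hspan horth
    (ne_bot_of_span_pair_sup_eq_top hspan hrank)
  have hc₁r (q : ℕ) (hq : q.Prime) (hqr : (q : ℤ) ∣ r) : ∃ y, ¬ (q : ℤ) ∣ B c₁ y := by
    by_cases hqp : q = p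
    · subst hqp
      exact hcop.resolve_left (not_not.mpr hqr)
    · by_contra! h
      exact hc₁ q hq (hprimary q hq hqp c₁ h)
  obtain ⟨z, hzN, hz, hzr⟩ := exists_mem_apply_self_ne_zero_and_prime_dvd B (B c₁) hw₀N hw₀ hr
    (fun q => (q : ℤ) ∣ B c₁ f₁ ∧ (q : ℤ) ∣ B c₁ f₂) fun q hq hqr hC =>
      have ⟨y, hy⟩ := hc₁r q hq hqr
      exists_mem_not_dvd_apply hspan (B c₁) hC.1 hC.2 hy
  exact exists_primitive_isotropic_gcd_apply_eq_one hB_symm hB_even hf₁ hf₂ hf₁f₂ horth hzN hz hzr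

/-- Lattice-theoretic core of Theorem 4.9: existence of a primitive isotropic
vector `x` with `gcd(r, B(c₁,x)) = 1` in an even, nondegenerate, `p`-primary
lattice of rank ≥ 3 containing the hyperbolic plane `U` as an orthogonal
direct summand. -/
theorem stmt_0
    (p : ℕ) (hp : p.Prime)
    (Λ : Type*) [AddCommGroup Λ] [Module ℤ Λ] [Module.Free ℤ Λ] [Module.Finite ℤ Λ]
    (B : Λ →ₗ[ℤ] Λ →ₗ[ℤ] ℤ)
    (hB_symm : ∀ x y : Λ, B x y = B y x)
    (hB_even : ∀ x : Λ, (2 : ℤ) ∣ B x x)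
    (hB_nondeg : ∀ x : Λ, (∀ y : Λ, B x y = 0) → x = 0)
    (hrank : 3 ≤ Module.finrank ℤ Λ)
    (hprimary : ∀ q : ℕ, q.Prime → q ≠ p →
      ∀ x : Λ, (∀ y : Λ, (q : ℤ) ∣ B x y) → ∃ z : Λ, x = (q : ℤ) • z)
    (f₁ f₂ : Λ) (Λ' : Submodule ℤ Λ)
    (hf₁ : B f₁ f₁ = 0) (hf₂ : B f₂ f₂ = 0) (hf₁f₂ : B f₁ f₂ = 1)
    (horth : ∀ x ∈ Λ', B f₁ x = 0 ∧ B f₂ x = 0)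
    (hcompl : IsCompl (Submodule.span ℤ ({f₁, f₂} : Set Λ)) Λ')
    (c₁ : Λ) (hc₁ : ∀ q : ℕ, q.Prime → ¬ ∃ y : Λ, c₁ = (q : ℤ) • y)
    (r : ℤ) (hr : r ≠ 0)
    (hcop : ¬ (p : ℤ) ∣ r ∨ ∃ y : Λ, ¬ (p : ℤ) ∣ B c₁ y) :
    ∃ x : Λ, (∀ q : ℕ, q.Prime → ¬ ∃ y : Λ, x = (q : ℤ) • y) ∧
      B x x = 0 ∧ Int.gcd r (B c₁ x) = 1 :=
  stmt_0_general p Λ B hB_symm hB_even hB_nondeg hrank hprimary f₁ f₂ Λ' hf₁ hf₂ hf₁f₂ horth hcompl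
    c₁ hc₁ r hr hcop
end

section
/- Let Λ = U ⊕ Λ' be an even lattice containing the hyperbolic plane U as an orthogonal direct summand, with standard basis f₁, f₂ of U. Let v₁, …, vₙ be a ℤ-basis of Λ'. Then the elements f₁, f₂, and v_j − m_j·f₁ + f₂ for 1 ≤ j ≤ n (where m_j is the integer with B(v_j, v_j) = 2·m_j) all satisfy B(x,x) = 0, and together they form a ℤ-basis of Λ. In particular, every even lattice containing U as an orthogonal direct summand admits a ℤ-basis consisting of isotropic vectors. (This is the construction in Step 2, case (1), of the proof of Theorem 4.9.) -/
/-!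
The hyperbolic pair `f₁, f₂` is linearly independent (pair it against `f₁` and `f₂`), so
together with the basis `v` of `Λ'` it is a basis of `Λ = U ⊕ Λ'`. Adding to each `v j` the
vector `-m j • f₁ + f₂ ∈ U` is a block-unitriangular change of basis, hence again gives a basis,
and `B (v j - m j • f₁ + f₂) (v j - m j • f₁ + f₂) = B (v j) (v j) - 2 * m j = 0`.
-/

section Hyperbolic

variable {R M : Type*} [CommRing R] [AddCommGroup M] [Module R M]
  (B : M →ₗ[R] M →ₗ[R] R) {f₁ f₂ : M}

theorem LinearMap.linearIndependent_pair_of_hyperbolic (hf₁ : B f₁ f₁ = 0) (hf₂ : B f₂ f₂ = 0)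
    (hf₁f₂ : B f₁ f₂ = 1) : LinearIndependent R ![f₁, f₂] := by
  refine LinearIndependent.pair_iff.mpr fun s t hst => ⟨?_, ?_⟩
  · simpa [hf₁, hf₂, hf₁f₂] using congrArg (B · f₂) hst
  · simpa [hf₁, hf₂, hf₁f₂] using congrArg (B f₁) hst

theorem LinearMap.apply_sub_smul_add_self (hB : ∀ x y, B x y = B y x) (hf₁ : B f₁ f₁ = 0)
    (hf₂ : B f₂ f₂ = 0) (hf₁f₂ : B f₁ f₂ = 1) {x : M} (hx₁ : B f₁ x = 0) (hx₂ : B f₂ x = 0)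
    (r : R) : B (x - r • f₁ + f₂) (x - r • f₁ + f₂) = B x x - 2 * r := by
  have hf₂f₁ : B f₂ f₁ = 1 := hB f₁ f₂ ▸ hf₁f₂
  simp only [map_add, map_sub, map_smul, LinearMap.add_apply, LinearMap.sub_apply,
    LinearMap.smul_apply, smul_eq_mul, hB x, hx₁, hx₂, hf₁, hf₂, hf₁f₂, hf₂f₁]
  ring

end Hyperbolic

namespace Module.Basis

variable {R M ι κ : Type*} [Ring R] [AddCommGroup M] [Module R M] {p q : Submodule R M}

noncomputable def shearOfIsCompl (h : IsCompl p q) (b : Basis ι R p) (v : Basis κ R q)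
    (w : κ → p) : Basis (ι ⊕ κ) R M :=
  ((v.prod b).map (((LinearEquiv.refl R q).skewProd (LinearEquiv.refl R p) (v.constr ℕ w)).trans
    (Submodule.prodEquivOfIsCompl q p h.symm))).reindex (Equiv.sumComm κ ι)

theorem coe_shearOfIsCompl (h : IsCompl p q) (b : Basis ι R p) (v : Basis κ R q) (w : κ → p) :
    ⇑(shearOfIsCompl h b v w) = Sum.elim (fun i => (b i : M)) (fun j => (v j : M) + w j) := by
  ext (i | j) <;> simp [shearOfIsCompl]

end Module.Basis

theorem stmt_4_general
    (Λ : Type*) [AddCommGroup Λ] [Module ℤ Λ]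
    (B : Λ →ₗ[ℤ] Λ →ₗ[ℤ] ℤ)
    (hB_symm : ∀ x y : Λ, B x y = B y x)
    (f₁ f₂ : Λ) (Λ' : Submodule ℤ Λ)
    (hf₁ : B f₁ f₁ = 0) (hf₂ : B f₂ f₂ = 0) (hf₁f₂ : B f₁ f₂ = 1)
    (horth : ∀ x ∈ Λ', B f₁ x = 0 ∧ B f₂ x = 0)
    (hcompl : IsCompl (Submodule.span ℤ ({f₁, f₂} : Set Λ)) Λ')
    (n : ℕ) (v : Module.Basis (Fin n) ℤ Λ')
    (m : Fin n → ℤ) (hm : ∀ j, B (v j : Λ) (v j : Λ) = 2 * m j)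
    (g : Fin 2 ⊕ Fin n → Λ)
    (hg : g = Sum.elim ![f₁, f₂] (fun j => ((v j : Λ) - m j • f₁) + f₂)) :
    (∀ i, B (g i) (g i) = 0) ∧ LinearIndependent ℤ g ∧
      Submodule.span ℤ (Set.range g) = ⊤ := by
  -- The statement mixes the given `Module ℤ Λ` with `zsmul` (in `v` and in `m j • f₁`).
  obtain rfl : ‹Module ℤ Λ› = AddCommGroup.toIntModule Λ := Subsingleton.elim _ _
  have hpair : Submodule.span ℤ (Set.range ![f₁, f₂]) = Submodule.span ℤ {f₁, f₂} := by
    rw [Matrix.range_cons_cons_empty]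
  let b := (Module.Basis.span (B.linearIndependent_pair_of_hyperbolic hf₁ hf₂ hf₁f₂)).map
    (LinearEquiv.ofEq _ _ hpair)
  have hbasis : ⇑(Module.Basis.shearOfIsCompl hcompl b v (fun j => -m j • b 0 + b 1)) = g := by
    rw [Module.Basis.coe_shearOfIsCompl, hg]
    ext (i | j)
    · fin_cases i <;> simp [b]
    · simp only [Module.Basis.map_apply, Module.Basis.span_apply, LinearEquiv.coe_ofEq_apply,
        Matrix.cons_val_zero, Matrix.cons_val_one, Matrix.cons_val_fin_one, neg_smul,
        Submodule.coe_add, NegMemClass.coe_neg, SetLike.val_smul, Sum.elim_inr, b]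
      abel
  refine ⟨?_, hbasis ▸ Module.Basis.linearIndependent _, hbasis ▸ Module.Basis.span_eq _⟩
  rintro (i | j)
  · fin_cases i <;> simpa [hg]
  · obtain ⟨hv₁, hv₂⟩ := horth _ (v j).2
    rw [hg, Sum.elim_inr, B.apply_sub_smul_add_self hB_symm hf₁ hf₂ hf₁f₂ hv₁ hv₂, hm, sub_self]

/-- Step 2, case (1), of the proof of Theorem 4.9: an even lattice containing
the hyperbolic plane `U` as an orthogonal direct summand has a ℤ-basis of
isotropic vectors, namely `f₁, f₂, v_j − m_j·f₁ + f₂`. -/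
theorem stmt_4
    (Λ : Type*) [AddCommGroup Λ] [Module ℤ Λ]
    (B : Λ →ₗ[ℤ] Λ →ₗ[ℤ] ℤ)
    (hB_symm : ∀ x y : Λ, B x y = B y x)
    (hB_even : ∀ x : Λ, (2 : ℤ) ∣ B x x)
    (f₁ f₂ : Λ) (Λ' : Submodule ℤ Λ)
    (hf₁ : B f₁ f₁ = 0) (hf₂ : B f₂ f₂ = 0) (hf₁f₂ : B f₁ f₂ = 1)
    (horth : ∀ x ∈ Λ', B f₁ x = 0 ∧ B f₂ x = 0)
    (hcompl : IsCompl (Submodule.span ℤ ({f₁, f₂} : Set Λ)) Λ')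
    (n : ℕ) (v : Module.Basis (Fin n) ℤ Λ')
    (m : Fin n → ℤ) (hm : ∀ j, B (v j : Λ) (v j : Λ) = 2 * m j)
    (g : Fin 2 ⊕ Fin n → Λ)
    (hg : g = Sum.elim ![f₁, f₂] (fun j => ((v j : Λ) - m j • f₁) + f₂)) :
    (∀ i, B (g i) (g i) = 0) ∧ LinearIndependent ℤ g ∧
      Submodule.span ℤ (Set.range g) = ⊤ :=
  stmt_4_general Λ B hB_symm f₁ f₂ Λ' hf₁ hf₂ hf₁f₂ horth hcompl n v m hm g hg
end

section
/- Let Λ be an even lattice containing the hyperbolic plane U as an orthogonal direct summand, let c₁ ∈ Λ, and let q be a prime such that there exists y ∈ Λ with q ∤ B(c₁, y). Then there exists x ∈ Λ with B(x, x) = 0 and q ∤ B(c₁, x). (This is the per-prime existence established in Steps 2 and 3 of the proof of Theorem 4.9: since Λ has a ℤ-basis of square-zero vectors, if c₁ paired with every square-zero basis vector were divisible by q, then q would divide B(c₁, y) for all y ∈ Λ.) -/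
/-- Per-prime existence from Steps 2–3 of the proof of Theorem 4.9: if some
`y ∈ Λ` pairs with `c₁` indivisibly by the prime `q`, then some isotropic
vector does. -/
theorem stmt_6
    (Λ : Type*) [AddCommGroup Λ] [Module ℤ Λ]
    (B : Λ →ₗ[ℤ] Λ →ₗ[ℤ] ℤ)
    (hB_symm : ∀ x y : Λ, B x y = B y x)
    (hB_even : ∀ x : Λ, (2 : ℤ) ∣ B x x)
    (f₁ f₂ : Λ) (Λ' : Submodule ℤ Λ)
    (hf₁ : B f₁ f₁ = 0) (hf₂ : B f₂ f₂ = 0) (hf₁f₂ : B f₁ f₂ = 1)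
    (horth : ∀ x ∈ Λ', B f₁ x = 0 ∧ B f₂ x = 0)
    (hcompl : IsCompl (Submodule.span ℤ ({f₁, f₂} : Set Λ)) Λ')
    (c₁ : Λ) (q : ℕ) (hq : q.Prime)
    (hy : ∃ y : Λ, ¬ (q : ℤ) ∣ B c₁ y) :
    ∃ x : Λ, B x x = 0 ∧ ¬ (q : ℤ) ∣ B c₁ x := by
  obtain ⟨y, hy⟩ := hy
  by_cases h1 : (q : ℤ) ∣ B c₁ f₁
  · by_cases h2 : (q : ℤ) ∣ B c₁ f₂
    · have hy' : y ∈ Submodule.span ℤ ({f₁, f₂} : Set Λ) ⊔ Λ' := by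
        rw [hcompl.sup_eq_top]; trivial
      obtain ⟨s, hs, z, hz, rfl⟩ := Submodule.mem_sup.mp hy'
      obtain ⟨a, b, rfl⟩ := Submodule.mem_span_pair.mp hs
      have hz1 : B f₁ z = 0 := (horth z hz).1
      have hz2 : B f₂ z = 0 := (horth z hz).2
      have hz1' : B z f₁ = 0 := by rw [hB_symm]; exact hz1
      have hz2' : B z f₂ = 0 := by rw [hB_symm]; exact hz2
      have hf₂f₁ : B f₂ f₁ = 1 := by rw [hB_symm]; exact hf₁f₂
      have hcz : ¬ (q : ℤ) ∣ B c₁ z := by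
        intro h
        apply hy
        simp only [map_add, map_smul, smul_eq_mul]
        exact dvd_add (dvd_add (h1.mul_left a) (h2.mul_left b)) h
      obtain ⟨k, hk⟩ := hB_even z
      refine ⟨z - k • f₁ + f₂, ?_, ?_⟩
      · simp [hf₁, hf₂, hf₁f₂, hf₂f₁, hz1, hz2, hz1', hz2', hk]
        ring
      · have hexp : B c₁ (z - k • f₁ + f₂) = B c₁ z - k * B c₁ f₁ + B c₁ f₂ := by
          simp
        rw [hexp]
        intro h
        apply hcz
        have : B c₁ z = (B c₁ z - k * B c₁ f₁ + B c₁ f₂) + k * B c₁ f₁ - B c₁ f₂ := by ring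
        rw [this]
        exact dvd_sub (dvd_add h (h1.mul_left k)) h2
    · exact ⟨f₂, hf₂, h2⟩
  · exact ⟨f₁, hf₁, h1⟩
end

section
/- Let p be a prime and let Λ be an even, nondegenerate, p-primary lattice containing the hyperbolic plane U as an orthogonal direct summand. Let c₁ ∈ Λ be primitive and let q be a prime different from p. Then there exists x ∈ Λ with B(x, x) = 0 and q ∤ B(c₁, x). (This is the conclusion of Step 2 of the proof of Theorem 4.9 for a single prime q ≠ p: were B(c₁, x) divisible by q for all square-zero x, then q would divide B(c₁, Λ), and p-primarity would force c₁ to be divisible by q, contradicting primitivity.) -/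
/-- Step 2 of the proof of Theorem 4.9 for a single prime `q ≠ p`: in an even,
nondegenerate, `p`-primary lattice containing `U` as an orthogonal direct
summand, a primitive class pairs indivisibly by `q` with some isotropic
vector. -/
theorem stmt_7
    (p : ℕ) (hp : p.Prime)
    (Λ : Type*) [AddCommGroup Λ] [Module ℤ Λ]
    (B : Λ →ₗ[ℤ] Λ →ₗ[ℤ] ℤ)
    (hB_symm : ∀ x y : Λ, B x y = B y x)
    (hB_even : ∀ x : Λ, (2 : ℤ) ∣ B x x)
    (hB_nondeg : ∀ x : Λ, (∀ y : Λ, B x y = 0) → x = 0)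
    (hprimary : ∀ q : ℕ, q.Prime → q ≠ p →
      ∀ x : Λ, (∀ y : Λ, (q : ℤ) ∣ B x y) → ∃ z : Λ, x = (q : ℤ) • z)
    (f₁ f₂ : Λ) (Λ' : Submodule ℤ Λ)
    (hf₁ : B f₁ f₁ = 0) (hf₂ : B f₂ f₂ = 0) (hf₁f₂ : B f₁ f₂ = 1)
    (horth : ∀ x ∈ Λ', B f₁ x = 0 ∧ B f₂ x = 0)
    (hcompl : IsCompl (Submodule.span ℤ ({f₁, f₂} : Set Λ)) Λ')
    (c₁ : Λ) (hc₁ : ∀ q : ℕ, q.Prime → ¬ ∃ y : Λ, c₁ = (q : ℤ) • y)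
    (q : ℕ) (hq : q.Prime) (hqp : q ≠ p) :
    ∃ x : Λ, B x x = 0 ∧ ¬ (q : ℤ) ∣ B c₁ x := by
  by_contra hcon
  push_neg at hcon
  -- hcon : ∀ x, B x x = 0 → q ∣ B c₁ x
  have h1 : (q : ℤ) ∣ B c₁ f₁ := hcon f₁ hf₁
  have h2 : (q : ℤ) ∣ B c₁ f₂ := hcon f₂ hf₂
  have hV : ∀ v ∈ Λ', (q : ℤ) ∣ B c₁ v := by
    intro v hv
    obtain ⟨m, hm⟩ := hB_even v
    have e1 := (horth v hv).1
    have e2 := (horth v hv).2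
    have e1' : B v f₁ = 0 := by rw [hB_symm]; exact e1
    have e2' : B v f₂ = 0 := by rw [hB_symm]; exact e2
    have e21 : B f₂ f₁ = 1 := by rw [hB_symm]; exact hf₁f₂
    have hs : ∀ w : Λ, B (m • f₁) w = m * B f₁ w := fun w => by
      simp
    have hs2 : ∀ w : Λ, B w (m • f₁) = m * B w f₁ := fun w => by simp
    have hx : B (v + f₂ - m • f₁) (v + f₂ - m • f₁) = 0 := by
      simp only [map_add, map_sub, map_smul, LinearMap.sub_apply, LinearMap.add_apply,
        LinearMap.smul_apply, smul_eq_mul, hs, hs2, e1, e2, e1', e2', e21, hf₁, hf₂, hf₁f₂, hm]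
      ring
    have hd := hcon _ hx
    have hexp : B c₁ (v + f₂ - m • f₁) = B c₁ v + B c₁ f₂ - m * B c₁ f₁ := by
      simp [map_add, map_sub, map_smul]
    have : B c₁ v = B c₁ (v + f₂ - m • f₁) - B c₁ f₂ + m * B c₁ f₁ := by
      rw [hexp]; ring
    rw [this]
    exact dvd_add (dvd_sub hd h2) (Dvd.dvd.mul_left h1 m)
  have hdvd : ∀ y : Λ, (q : ℤ) ∣ B c₁ y := by
    intro y
    have hy : y ∈ Submodule.span ℤ ({f₁, f₂} : Set Λ) ⊔ Λ' := by
      rw [hcompl.sup_eq_top]; trivial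
    obtain ⟨u, hu, v, hv, rfl⟩ := Submodule.mem_sup.mp hy
    obtain ⟨a, b, rfl⟩ := Submodule.mem_span_pair.mp hu
    have hd : (q : ℤ) ∣ a * B c₁ f₁ + b * B c₁ f₂ + B c₁ v :=
      dvd_add (dvd_add (h1.mul_left a) (h2.mul_left b)) (hV v hv)
    simpa [map_add, map_smul, mul_comm] using hd
  obtain ⟨z, hz⟩ := hprimary q hq hqp c₁ hdvd
  exact hc₁ q hq ⟨z, hz⟩
end

section
/- Let Λ be an even, nondegenerate lattice of rank at least 3 containing the hyperbolic plane U as an orthogonal direct summand, let c₁ ∈ Λ, and let r be a nonzero integer. Suppose that for every prime q dividing r there exists x_q ∈ Λ with B(x_q, x_q) = 0 and q ∤ B(c₁, x_q). Then there exists x ∈ Λ with B(x, x) = 0 and gcd(r, B(c₁, x)) = 1. (This is the combination step in Step 2 of the proof of Theorem 4.9, which the paper deduces from weak approximation on the quadric x² = 0: the sets U_q = {x ∈ X(ℤ_q) : x·c₁ ∈ ℤ_q^×} are nonempty open subsets, and density of X(ℤ) in ∏_q X(ℤ_q) produces a simultaneous integral solution.) -/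
/-!
For isotropic `e`, the line through `e` and `y` meets the quadric `Q = 0` again at
`x = B e y • y - Q y • e`, and `B c₁ x` is a quadratic function of `y`. Such a function can be made
prime to all `q ∣ r` at once by the Chinese remainder theorem, provided it is nonzero modulo each
`q` separately. Modulo `q` this holds for `e = f₁` or for `e = f₂`, since otherwise `B c₁` would
vanish modulo `q`. Sorting the primes accordingly into coprime products `m₁`, `m₂`, it remains to
find an isotropic `e` congruent to a unit multiple of `f₁` modulo `m₁` and of `f₂` modulo `m₂`.
Rank at least 3 and nondegeneracy give `w ∈ Λ'` with `Q w ≠ 0`; writing `Q w = c * d` with `c`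
prime to `m₂` and `d` prime to `m₁`, the vector `-(m₂² d) f₁ + (m₁² c) f₂ + m₁ m₂ w` does it.
-/

open Finset

theorem exists_mul_eq_isCoprime_isCoprime {R : Type*} [CommRing R] [IsDomain R]
    [IsPrincipalIdealRing R] {m₁ m₂ : R} (hm : IsCoprime m₁ m₂) {n : R} (hn : n ≠ 0) :
    ∃ c d, n = c * d ∧ IsCoprime c m₂ ∧ IsCoprime d m₁ := by
  induction n using UniqueFactorizationMonoid.induction_on_prime with
  | h₁ => exact absurd rfl hn
  | h₂ u hu => exact ⟨1, u, (one_mul u).symm, isCoprime_one_left,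
      isCoprime_one_left.of_isCoprime_of_dvd_left hu.dvd⟩
  | h₃ a p ha hp ih =>
    obtain ⟨c, d, rfl, hc, hd⟩ := ih ha
    have hcop (m : R) : IsCoprime p m ↔ ¬p ∣ m := hp.irreducible.coprime_iff_not_dvd
    by_cases hpm : p ∣ m₁
    · have hpm₂ : IsCoprime p m₂ :=
        (hcop m₂).2 fun hpm₂ => hp.not_isUnit (hm.isUnit_of_dvd' hpm hpm₂)
      exact ⟨p * c, d, by ring, hpm₂.mul_left hc, hd⟩
    · exact ⟨c, p * d, by ring, hc, ((hcop m₁).2 hpm).mul_left hd⟩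

theorem exists_forall_not_dvd_of_dvd_sub_sq {M : Type*} [AddCommGroup M]
    (g : M → ℤ) (hg : ∀ (k μ : ℤ) (y z : M), k ∣ g (μ • y + k • z) - μ ^ 2 * g y)
    (S : Finset ℕ) (hS : ∀ q ∈ S, q.Prime) (h : ∀ q ∈ S, ∃ y, ¬(q : ℤ) ∣ g y) :
    ∃ y, ∀ q ∈ S, ¬(q : ℤ) ∣ g y := by
  classical
  choose! Y hY using h
  refine ⟨∑ j ∈ S, (∏ i ∈ S.erase j, (i : ℤ)) • Y j, fun q hq hdvd => ?_⟩
  have hsplit : ∑ j ∈ S, (∏ i ∈ S.erase j, (i : ℤ)) • Y j = (∏ i ∈ S.erase q, (i : ℤ)) • Y q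
      + (q : ℤ) • ∑ j ∈ S.erase q, (∏ i ∈ (S.erase j).erase q, (i : ℤ)) • Y j := by
    rw [← add_sum_erase S _ hq, smul_sum]
    congr 1
    refine sum_congr rfl fun j hj => ?_
    rw [← mul_smul, mul_prod_erase _ _ (mem_erase.2 ⟨(ne_of_mem_erase hj).symm, hq⟩)]
  have hq' : Prime (q : ℤ) := Nat.prime_iff_prime_int.mp (hS q hq)
  have hM : ¬(q : ℤ) ∣ ∏ i ∈ S.erase q, (i : ℤ) := by
    rw [hq'.dvd_finsetProd_iff]
    rintro ⟨i, hi, hqi⟩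
    exact (ne_of_mem_erase hi) ((Nat.prime_dvd_prime_iff_eq (hS q hq)
      (hS i (mem_of_mem_erase hi))).1 (Int.natCast_dvd_natCast.1 hqi)).symm
  rw [hsplit] at hdvd
  rcases hq'.dvd_mul.1 ((dvd_sub_right hdvd).1 (hg _ _ _ _)) with h | h
  · exact hM (hq'.dvd_of_dvd_pow h)
  · exact hY q hq h

theorem isCoprime_prod_filter_prod_filter_not {S : Finset ℕ} (hS : ∀ q ∈ S, q.Prime)
    (P : ℕ → Prop) [DecidablePred P] :
    IsCoprime (∏ q ∈ S.filter P, (q : ℤ)) (∏ q ∈ S.filter (¬P ·), (q : ℤ)) :=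
  IsCoprime.prod_left fun p hp => IsCoprime.prod_right fun q hq =>
    Nat.isCoprime_iff_coprime.2 <| (Nat.coprime_primes (hS p (mem_filter.1 hp).1)
      (hS q (mem_filter.1 hq).1)).2 fun hpq => (mem_filter.1 hq).2 (hpq ▸ (mem_filter.1 hp).2)

section Quadric

variable {Λ : Type*} [AddCommGroup Λ] (B : Λ →ₗ[ℤ] Λ →ₗ[ℤ] ℤ) (Q : Λ → ℤ)

/-- For `e` on the quadric `Q = 0`, the second point where the line through `e` and `y`
meets it. -/
def secondIntersection (e y : Λ) : Λ := B e y • y - Q y • e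

variable {B Q}

theorem secondIntersection_smul_add_smul (a b : ℤ) (e e' y : Λ) :
    secondIntersection B Q (a • e + b • e') y
      = a • secondIntersection B Q e y + b • secondIntersection B Q e' y := by
  simp only [secondIntersection, map_add, map_smul, LinearMap.add_apply, LinearMap.smul_apply,
    smul_eq_mul]
  module

theorem not_dvd_apply_secondIntersection_of_eq_smul_add_smul {q m a : ℤ} (hq : Prime q)
    (hqm : q ∣ m) (ha : IsCoprime a m) {c e f z y : Λ} (he : e = a • f + m • z)
    (hy : ¬q ∣ B c (secondIntersection B Q f y)) : ¬q ∣ B c (secondIntersection B Q e y) := by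
  rw [he, secondIntersection_smul_add_smul, map_add, map_smul, map_smul, smul_eq_mul, smul_eq_mul,
    dvd_add_left (dvd_mul_of_dvd_left hqm _)]
  intro hdvd
  rcases hq.dvd_mul.1 hdvd with hqa | hqy
  · exact hq.not_isUnit (ha.isUnit_of_dvd' hqa hqm)
  · exact hy hqy

variable (hB : ∀ x y, B x y = B y x) (hQ : ∀ y, 2 * Q y = B y y)
include hB hQ

theorem apply_secondIntersection_self {e : Λ} (he : B e e = 0) (y : Λ) :
    B (secondIntersection B Q e y) (secondIntersection B Q e y) = 0 := by
  simp only [secondIntersection, map_sub, map_smul, LinearMap.sub_apply, LinearMap.smul_apply,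
    smul_eq_mul, he, hB y e, ← hQ y]
  ring

theorem map_smul_add_smul (μ k : ℤ) (y z : Λ) :
    Q (μ • y + k • z) = μ ^ 2 * Q y + k * (μ * B y z + k * Q z) := by
  refine mul_left_cancel₀ (two_ne_zero (α := ℤ)) ?_
  rw [hQ]
  simp only [map_add, map_smul, LinearMap.add_apply, LinearMap.smul_apply, smul_eq_mul,
    hB z y, ← hQ y, ← hQ z]
  ring

theorem dvd_apply_secondIntersection_smul_add_sub (c e : Λ) (k μ : ℤ) (y z : Λ) :
    k ∣ B c (secondIntersection B Q e (μ • y + k • z))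
      - μ ^ 2 * B c (secondIntersection B Q e y) := by
  simp only [secondIntersection, map_sub, map_smul, map_add,
    smul_eq_mul, map_smul_add_smul hB hQ]
  exact ⟨μ * B e y * B c z + B e z * (μ * B c y + k * B c z) - (μ * B y z + k * Q z) * B c e,
    by ring⟩

end Quadric

section HyperbolicPair

variable {Λ : Type*} [AddCommGroup Λ] {B : Λ →ₗ[ℤ] Λ →ₗ[ℤ] ℤ} {Q : Λ → ℤ}
  (hB : ∀ x y, B x y = B y x) (hQ : ∀ y, 2 * Q y = B y y)
  {f₁ f₂ : Λ} (hf₁ : B f₁ f₁ = 0) (hf₂ : B f₂ f₂ = 0) (hf₁f₂ : B f₁ f₂ = 1)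
include hB hQ hf₁ hf₂ hf₁f₂

theorem exists_not_dvd_apply_secondIntersection {c x : Λ} {q : ℤ} (hx : ¬q ∣ B c x) :
    (∃ y, ¬q ∣ B c (secondIntersection B Q f₁ y)) ∨
      ∃ y, ¬q ∣ B c (secondIntersection B Q f₂ y) := by
  by_contra! ⟨h₁, h₂⟩
  have hQf₁ : Q f₁ = 0 := by linarith [hQ f₁]
  have hQf₂ : Q f₂ = 0 := by linarith [hQ f₂]
  have hcf₁ : q ∣ B c f₁ := by
    simpa [secondIntersection, hB f₂ f₁, hf₁f₂, hQf₁] using h₂ f₁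
  have hcf₂ : q ∣ B c f₂ := by
    simpa [secondIntersection, hf₁f₂, hQf₂] using h₁ f₂
  set y := x + (1 - B f₁ x) • f₂
  have hy : B f₁ y = 1 := by simp [y, hf₁f₂]
  have hcy : q ∣ B c y := by
    have h := h₁ y
    simp only [secondIntersection, map_sub, map_smul, smul_eq_mul, hy, one_mul] at h
    simpa using dvd_add h (dvd_mul_of_dvd_right hcf₁ (Q y))
  apply hx
  have hcx : B c x = B c y - (1 - B f₁ x) * B c f₂ := by simp [y]
  rw [hcx]
  exact dvd_sub hcy (dvd_mul_of_dvd_right hcf₂ _)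

theorem exists_isotropic_eq_smul_add_smul {w : Λ} (hw₁ : B f₁ w = 0) (hw₂ : B f₂ w = 0)
    (hw : Q w ≠ 0) {m₁ m₂ : ℤ} (hm : IsCoprime m₁ m₂) :
    ∃ e, B e e = 0 ∧ (∃ a z, IsCoprime a m₁ ∧ e = a • f₁ + m₁ • z) ∧
      ∃ b z, IsCoprime b m₂ ∧ e = b • f₂ + m₂ • z := by
  obtain ⟨c, d, hcd, hc, hd⟩ := exists_mul_eq_isCoprime_isCoprime hm hw
  refine ⟨(-(m₂ ^ 2 * d)) • f₁ + (m₁ ^ 2 * c) • f₂ + (m₁ * m₂) • w, ?_,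
    ⟨-(m₂ ^ 2 * d), (m₁ * c) • f₂ + m₂ • w, (hm.symm.pow_left.mul_left hd).neg_left, by module⟩,
    ⟨m₁ ^ 2 * c, (-(m₂ * d)) • f₁ + m₁ • w, hm.pow_left.mul_left hc, by module⟩⟩
  simp only [map_add, map_smul, LinearMap.add_apply, LinearMap.smul_apply, smul_eq_mul, hf₁, hf₂,
    hf₁f₂, hB f₂ f₁, hw₁, hw₂, hB w f₁, hB w f₂, ← hQ w, hcd]
  ring

theorem exists_isotropic_forall_exists_not_dvd {w : Λ} (hw₁ : B f₁ w = 0) (hw₂ : B f₂ w = 0)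
    (hw : Q w ≠ 0) {c : Λ} {S : Finset ℕ} (hS : ∀ q ∈ S, q.Prime)
    (hc : ∀ q ∈ S, ∃ x, ¬(q : ℤ) ∣ B c x) :
    ∃ e, B e e = 0 ∧ ∀ q ∈ S, ∃ y, ¬(q : ℤ) ∣ B c (secondIntersection B Q e y) := by
  classical
  set P : ℕ → Prop := fun q => ∃ y, ¬(q : ℤ) ∣ B c (secondIntersection B Q f₁ y)
  obtain ⟨e, he, ⟨a, z, ha, hea⟩, b, z', hb, heb⟩ := exists_isotropic_eq_smul_add_smul hB hQ
    hf₁ hf₂ hf₁f₂ hw₁ hw₂ hw (isCoprime_prod_filter_prod_filter_not hS P)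
  refine ⟨e, he, fun q hq => ?_⟩
  have hq' : Prime (q : ℤ) := Nat.prime_iff_prime_int.mp (hS q hq)
  by_cases hP : P q
  · obtain ⟨y, hy⟩ := hP
    exact ⟨y, not_dvd_apply_secondIntersection_of_eq_smul_add_smul hq'
      (dvd_prod_of_mem _ (mem_filter.2 ⟨hq, y, hy⟩)) ha hea hy⟩
  · obtain ⟨x, hx⟩ := hc q hq
    obtain ⟨y, hy⟩ :=
      (exists_not_dvd_apply_secondIntersection hB hQ hf₁ hf₂ hf₁f₂ hx).resolve_left hP
    exact ⟨y, not_dvd_apply_secondIntersection_of_eq_smul_add_smul hq'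
      (dvd_prod_of_mem _ (mem_filter.2 ⟨hq, hP⟩)) hb heb hy⟩

end HyperbolicPair

section Complement

variable {Λ : Type*} [AddCommGroup Λ] {f₁ f₂ : Λ} {Λ' : Submodule ℤ Λ}

theorem exists_sub_smul_sub_smul_mem (hcompl : IsCompl (Submodule.span ℤ {f₁, f₂}) Λ') (x : Λ) :
    ∃ a b : ℤ, x - a • f₁ - b • f₂ ∈ Λ' := by
  obtain ⟨u, hu, v, hv, rfl⟩ :=
    Submodule.mem_sup.1 (hcompl.codisjoint.eq_top ▸ Submodule.mem_top (x := x))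
  obtain ⟨a, b, rfl⟩ := Submodule.mem_span_pair.1 hu
  exact ⟨a, b, by simpa [sub_sub, add_sub_cancel_left] using hv⟩

theorem ne_bot_of_isCompl_span_pair (hrank : 3 ≤ Module.finrank ℤ Λ)
    (hcompl : IsCompl (Submodule.span ℤ {f₁, f₂}) Λ') : Λ' ≠ ⊥ := by
  classical
  rintro rfl
  have hle : Module.finrank ℤ Λ ≤ 2 := by
    rw [← finrank_top ℤ Λ, ← eq_top_of_isCompl_bot hcompl]
    exact (finrank_span_le_card _).trans (by simpa using Finset.card_le_two)
  omega

theorem exists_mem_apply_self_ne_zero_s8 {B : Λ →ₗ[ℤ] Λ →ₗ[ℤ] ℤ} (hB : ∀ x y, B x y = B y x)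
    (hB_nondeg : ∀ x, (∀ y, B x y = 0) → x = 0) (hrank : 3 ≤ Module.finrank ℤ Λ)
    (horth : ∀ x ∈ Λ', B f₁ x = 0 ∧ B f₂ x = 0)
    (hcompl : IsCompl (Submodule.span ℤ {f₁, f₂}) Λ') : ∃ w ∈ Λ', B w w ≠ 0 := by
  obtain ⟨w, hw, hw0⟩ := Submodule.exists_mem_ne_zero_of_ne_bot
    (ne_bot_of_isCompl_span_pair hrank hcompl)
  obtain ⟨y, hy⟩ : ∃ y, B w y ≠ 0 := by
    by_contra! h
    exact hw0 (hB_nondeg w h)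
  obtain ⟨a, b, hv⟩ := exists_sub_smul_sub_smul_mem hcompl y
  have hwv : B w (y - a • f₁ - b • f₂) ≠ 0 := by
    simpa [hB w f₁, hB w f₂, (horth w hw).1, (horth w hw).2] using hy
  -- if `w` and `v` are isotropic then `B (w + v) (w + v) = 2 * B w v`
  by_contra! h
  have := h _ (Λ'.add_mem hw hv)
  simp only [map_add, LinearMap.add_apply, h w hw, h _ hv, hB _ w] at this
  omega

end Complement

theorem stmt_8_general
    (Λ : Type*) [AddCommGroup Λ] [Module ℤ Λ]
    (B : Λ →ₗ[ℤ] Λ →ₗ[ℤ] ℤ)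
    (hB_symm : ∀ x y : Λ, B x y = B y x)
    (hB_even : ∀ x : Λ, (2 : ℤ) ∣ B x x)
    (hB_nondeg : ∀ x : Λ, (∀ y : Λ, B x y = 0) → x = 0)
    (hrank : 3 ≤ Module.finrank ℤ Λ)
    (f₁ f₂ : Λ) (Λ' : Submodule ℤ Λ)
    (hf₁ : B f₁ f₁ = 0) (hf₂ : B f₂ f₂ = 0) (hf₁f₂ : B f₁ f₂ = 1)
    (horth : ∀ x ∈ Λ', B f₁ x = 0 ∧ B f₂ x = 0)
    (hcompl : IsCompl (Submodule.span ℤ ({f₁, f₂} : Set Λ)) Λ')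
    (c₁ : Λ) (r : ℤ) (hr : r ≠ 0)
    (hsol : ∀ q : ℕ, q.Prime → (q : ℤ) ∣ r →
      ∃ x : Λ, B x x = 0 ∧ ¬ (q : ℤ) ∣ B c₁ x) :
    ∃ x : Λ, B x x = 0 ∧ Int.gcd r (B c₁ x) = 1 := by
  -- `Module ℤ Λ` is a subsingleton: switch to the structure coming from `AddCommGroup Λ`
  obtain rfl : ‹Module ℤ Λ› = AddCommGroup.toIntModule Λ := Subsingleton.elim _ _
  obtain ⟨Q, hQ⟩ : ∃ Q : Λ → ℤ, ∀ v, 2 * Q v = B v v :=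
    ⟨fun v => B v v / 2, fun v => Int.mul_ediv_cancel' (hB_even v)⟩
  obtain ⟨w, hw, hww⟩ := exists_mem_apply_self_ne_zero_s8 hB_symm hB_nondeg hrank horth hcompl
  have hQw : Q w ≠ 0 := fun h => hww (by rw [← hQ, h, mul_zero])
  set S := r.natAbs.primeFactors
  have hS : ∀ q ∈ S, q.Prime := fun q hq => Nat.prime_of_mem_primeFactors hq
  obtain ⟨e, he, hgood⟩ := exists_isotropic_forall_exists_not_dvd hB_symm hQ hf₁ hf₂ hf₁f₂
    (horth w hw).1 (horth w hw).2 hQw hS fun q hq =>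
      (hsol q (hS q hq) (Int.natCast_dvd.2 (Nat.dvd_of_mem_primeFactors hq))).imp fun _ => And.right
  obtain ⟨y, hy⟩ := exists_forall_not_dvd_of_dvd_sub_sq _
    (dvd_apply_secondIntersection_smul_add_sub hB_symm hQ c₁ e) S hS hgood
  refine ⟨secondIntersection B Q e y, apply_secondIntersection_self hB_symm hQ he y, ?_⟩
  exact Nat.coprime_of_dvd fun p hp hpr hpx =>
    hy p (Nat.mem_primeFactors.2 ⟨hp, hpr, Int.natAbs_ne_zero.2 hr⟩) (Int.natCast_dvd.2 hpx)

/-- Combination step (weak approximation) in Step 2 of the proof of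
Theorem 4.9: per-prime isotropic solutions combine to an isotropic vector `x`
with `gcd(r, B(c₁,x)) = 1`. -/
theorem stmt_8
    (Λ : Type*) [AddCommGroup Λ] [Module ℤ Λ] [Module.Free ℤ Λ] [Module.Finite ℤ Λ]
    (B : Λ →ₗ[ℤ] Λ →ₗ[ℤ] ℤ)
    (hB_symm : ∀ x y : Λ, B x y = B y x)
    (hB_even : ∀ x : Λ, (2 : ℤ) ∣ B x x)
    (hB_nondeg : ∀ x : Λ, (∀ y : Λ, B x y = 0) → x = 0)
    (hrank : 3 ≤ Module.finrank ℤ Λ)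
    (f₁ f₂ : Λ) (Λ' : Submodule ℤ Λ)
    (hf₁ : B f₁ f₁ = 0) (hf₂ : B f₂ f₂ = 0) (hf₁f₂ : B f₁ f₂ = 1)
    (horth : ∀ x ∈ Λ', B f₁ x = 0 ∧ B f₂ x = 0)
    (hcompl : IsCompl (Submodule.span ℤ ({f₁, f₂} : Set Λ)) Λ')
    (c₁ : Λ) (r : ℤ) (hr : r ≠ 0)
    (hsol : ∀ q : ℕ, q.Prime → (q : ℤ) ∣ r →
      ∃ x : Λ, B x x = 0 ∧ ¬ (q : ℤ) ∣ B c₁ x) :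
    ∃ x : Λ, B x x = 0 ∧ Int.gcd r (B c₁ x) = 1 :=
  stmt_8_general Λ B hB_symm hB_even hB_nondeg hrank f₁ f₂ Λ' hf₁ hf₂ hf₁f₂ horth hcompl c₁ r hr
    hsol
end

section
/- Let Λ be a finitely generated free ℤ-module of rank at least 2, let r be a nonzero integer, and let c₁ ∈ Λ be such that the pair (r, c₁) is primitive in ℤ ⊕ Λ (that is, there is no prime q with q ∣ r and c₁ ∈ qΛ). Then there exists L ∈ Λ such that c₁ + r·L is a primitive element of Λ. (This is the reduction in Step 1 of the proof of Theorem 4.9: after tensoring the Mukai vector by a suitable line bundle, one may assume the first Chern class is primitive.) -/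
/-- Step 1 of the proof of Theorem 4.9: if `(r, c₁)` is primitive in `ℤ ⊕ Λ`,
then `c₁ + r·L` is primitive in `Λ` for a suitable `L`. -/
theorem stmt_9
    (Λ : Type*) [AddCommGroup Λ] [Module ℤ Λ] [Module.Free ℤ Λ] [Module.Finite ℤ Λ]
    (hrank : 2 ≤ Module.finrank ℤ Λ)
    (r : ℤ) (hr : r ≠ 0) (c₁ : Λ)
    (hprim : ¬ ∃ q : ℕ, q.Prime ∧ (q : ℤ) ∣ r ∧ ∃ y : Λ, c₁ = (q : ℤ) • y) :
    ∃ L : Λ, ∀ q : ℕ, q.Prime → ¬ ∃ y : Λ, c₁ + r • L = (q : ℤ) • y := by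
  classical
  set b := Module.Free.chooseBasis ℤ Λ with hb
  have hcard : 1 < Fintype.card (Module.Free.ChooseBasisIndex ℤ Λ) := by
    have := Module.finrank_eq_card_chooseBasisIndex ℤ Λ
    omega
  obtain ⟨i₀, i₁, hne⟩ := Fintype.exists_pair_of_one_lt_card hcard
  set a : Module.Free.ChooseBasisIndex ℤ Λ → ℤ := fun i => b.repr c₁ i with ha
  set t : ℤ := if a i₀ = 0 then 1 else 0 with ht
  have hN : a i₀ + r * t ≠ 0 := by
    rw [ht]; split_ifs with h
    · simpa [h] using hr
    · simpa using h
  set k : ℕ := (a i₀ + r * t).natAbs with hkdef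
  have hk : k ≠ 0 := Int.natAbs_ne_zero.mpr hN
  set G : ℕ := Nat.gcd k (r.natAbs ^ k) with hGdef
  have hGdvd : G ∣ k := Nat.gcd_dvd_left _ _
  set m : ℕ := k / G with hmdef
  have hmul : G * m = k := Nat.mul_div_cancel' hGdvd
  have hm0 : m ≠ 0 := by
    intro h; rw [h, mul_zero] at hmul; exact hk hmul.symm
  have hrabs : r.natAbs ≠ 0 := Int.natAbs_ne_zero.mpr hr
  have hpow0 : r.natAbs ^ k ≠ 0 := pow_ne_zero _ hrabs
  -- m is coprime to r
  have hcop : Nat.Coprime m r.natAbs := by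
    rw [Nat.coprime_iff_gcd_eq_one]
    by_contra hg
    obtain ⟨p, hp, hpdvd⟩ := Nat.exists_prime_and_dvd hg
    have hpm : p ∣ m := hpdvd.trans (Nat.gcd_dvd_left _ _)
    have hpr : p ∣ r.natAbs := hpdvd.trans (Nat.gcd_dvd_right _ _)
    have h1 : m.factorization p = k.factorization p - G.factorization p := by
      rw [hmdef, Nat.factorization_div hGdvd]; simp
    have h2 : G.factorization p = min (k.factorization p) (k * r.natAbs.factorization p) := by
      rw [hGdef, Nat.factorization_gcd hk hpow0]
      simp [Finsupp.inf_apply, Nat.factorization_pow]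
    have h3 : k.factorization p < k := Nat.factorization_lt p hk
    have h4 : 0 < r.natAbs.factorization p := hp.factorization_pos_of_dvd hrabs hpr
    have h5 : 0 < m.factorization p := hp.factorization_pos_of_dvd hm0 hpm
    have : min (k.factorization p) (k * r.natAbs.factorization p) = k.factorization p := by
      have : k.factorization p ≤ k * r.natAbs.factorization p := by nlinarith
      omega
    omega
  have hcopZ : IsCoprime (r : ℤ) (m : ℤ) := by
    rw [Int.isCoprime_iff_gcd_eq_one]
    simpa [Int.gcd] using hcop.symm
  obtain ⟨x, u, hxu⟩ := hcopZ
  set s : ℤ := x * (1 - a i₁) with hs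
  refine ⟨t • b i₀ + s • b i₁, ?_⟩
  intro q hq h
  obtain ⟨y', hy'⟩ := h
  have key : ∀ (z : ℤ) (w : Λ) (j : Module.Free.ChooseBasisIndex ℤ Λ),
      b.repr (z • w) j = z * b.repr w j := by
    intro z w j; rw [map_zsmul]; simp
  have hcoord : ∀ i, (q : ℤ) ∣ a i + r * (t * (Finsupp.single i₀ (1:ℤ) i)
      + s * (Finsupp.single i₁ (1:ℤ) i)) := by
    intro i
    refine ⟨b.repr y' i, ?_⟩
    have h1 : b.repr (c₁ + r • (t • b i₀ + s • b i₁)) i = (q : ℤ) * b.repr y' i := by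
      rw [hy', key]
    rw [← h1, map_add, Finsupp.add_apply, key, map_add, Finsupp.add_apply, key, key,
      Module.Basis.repr_self, Module.Basis.repr_self]
  have hc0 : (q : ℤ) ∣ a i₀ + r * t := by
    have := hcoord i₀
    simpa [Finsupp.single_apply, hne, Ne.symm hne] using this
  have hc1 : (q : ℤ) ∣ a i₁ + r * s := by
    have := hcoord i₁
    simpa [Finsupp.single_apply, hne, Ne.symm hne] using this
  by_cases hqr : (q : ℤ) ∣ r
  · -- q divides r: contradicts primitivity of (r, c₁)
    have hai : ∀ i, (q : ℤ) ∣ a i := by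
      intro i
      have h1 := hcoord i
      have h2 : (q : ℤ) ∣ r * (t * (Finsupp.single i₀ (1:ℤ) i)
          + s * (Finsupp.single i₁ (1:ℤ) i)) := hqr.mul_right _
      have := dvd_sub h1 h2
      simpa using this
    refine hprim ⟨q, hq, hqr,
      b.repr.symm (Finsupp.mapRange (fun z => z / (q : ℤ)) (by simp) (b.repr c₁)), ?_⟩
    apply b.repr.injective
    ext i
    rw [key, LinearEquiv.apply_symm_apply, Finsupp.mapRange_apply]
    exact (Int.mul_ediv_cancel' (hai i)).symm
  · -- q does not divide r
    have hqk : q ∣ k := by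
      have := Int.natAbs_dvd_natAbs.mpr hc0
      simpa [hkdef] using this
    have hqm : q ∣ m := by
      rcases (Nat.Prime.dvd_mul hq).mp (hmul ▸ hqk) with hG | hm
      · exfalso
        have : q ∣ r.natAbs ^ k := hG.trans (Nat.gcd_dvd_right _ _)
        have hqr' : q ∣ r.natAbs := hq.dvd_of_dvd_pow this
        exact hqr ((Int.natCast_dvd_natCast.mpr hqr').trans (Int.natAbs_dvd.mpr dvd_rfl))
      · exact hm
    have hms : (m : ℤ) ∣ a i₁ + r * s - 1 :=
      ⟨-u * (1 - a i₁), by rw [hs]; linear_combination (1 - a i₁) * hxu⟩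
    have hq1 : (q : ℤ) ∣ 1 := by
      have h2 : (q : ℤ) ∣ a i₁ + r * s - 1 := (Int.natCast_dvd_natCast.mpr hqm).trans hms
      have := dvd_sub hc1 h2
      simpa using this
    exact (Int.prime_iff_natAbs_prime.2 (by simpa using hq)).not_dvd_one hq1
end

section
/- Let A be a 2-divisible abelian group (for every a ∈ A there exists b ∈ A with 2b = a), let n ≥ 1, and let (x₀, …, xₙ) ∈ A^{n+1} satisfy x₀ + ⋯ + xₙ = 0. For 0 ≤ k ≤ n define P_k ∈ A^{n+1} by P_k = (x₀, …, x_{k−1}, −(x₀ + ⋯ + x_{k−1}), 0, …, 0), so that P₀ = (0, …, 0) and Pₙ = (x₀, …, xₙ). Then for every 0 ≤ k < n there exist u, t₁, t₂ ∈ A with 2u = x₀ + ⋯ + x_{k−1} such that P_k = (x₀, …, x_{k−1}, t₁ − u, −t₁ − u, 0, …, 0) and P_{k+1} = (x₀, …, x_{k−1}, t₂ − u, −t₂ − u, 0, …, 0). (This is the chain construction in the proof of Proposition 6.5: any point of the singular generalized Kummer variety K'_n(A) = A₀^{n+1}/S_{n+1} is connected to the origin by a chain of n surfaces, each the image of the unirational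 Kummer surface A/±1, proving rational chain connectedness of K_n(A) for a supersingular abelian surface A.) -/
open Finset

lemma Fin.sum_filter_val_lt_succ {M : Type*} [AddCommMonoid M] {m : ℕ} (f : Fin m → M) {k : ℕ}
    (hk : k < m) :
    ∑ j ∈ univ.filter (fun j : Fin m => (j : ℕ) < k + 1), f j
      = ∑ j ∈ univ.filter (fun j : Fin m => (j : ℕ) < k), f j + f ⟨k, hk⟩ := by
  have hset : univ.filter (fun j : Fin m => (j : ℕ) < k + 1)
      = insert ⟨k, hk⟩ (univ.filter (fun j : Fin m => (j : ℕ) < k)) := by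
    ext j
    simp only [mem_filter, mem_univ, true_and, mem_insert, Fin.ext_iff]
    omega
  rw [hset, sum_insert (by simp), add_comm]

theorem stmt_14_general
    (A : Type*) [AddCommGroup A]
    (hdiv : ∀ a : A, ∃ b : A, 2 • b = a)
    (n : ℕ)
    (x : Fin (n + 1) → A)
    (P : ℕ → Fin (n + 1) → A)
    (hP : ∀ k, ∀ i : Fin (n + 1), P k i =
      if (i : ℕ) < k then x i
      else if (i : ℕ) = k then
        -(∑ j ∈ Finset.univ.filter (fun j : Fin (n + 1) => (j : ℕ) < k), x j)
      else 0) :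
    ∀ k, k < n → ∃ u t₁ t₂ : A,
      2 • u = (∑ j ∈ Finset.univ.filter (fun j : Fin (n + 1) => (j : ℕ) < k), x j) ∧
      (∀ i : Fin (n + 1), P k i =
        if (i : ℕ) < k then x i
        else if (i : ℕ) = k then t₁ - u
        else if (i : ℕ) = k + 1 then -t₁ - u
        else 0) ∧
      (∀ i : Fin (n + 1), P (k + 1) i =
        if (i : ℕ) < k then x i
        else if (i : ℕ) = k then t₂ - u
        else if (i : ℕ) = k + 1 then -t₂ - u
        else 0) := by
  intro k hk
  obtain ⟨u, hu⟩ := hdiv (∑ j ∈ univ.filter (fun j : Fin (n + 1) => (j : ℕ) < k), x j)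
  have hsum := Fin.sum_filter_val_lt_succ x (Nat.lt_succ_of_lt hk)
  -- `t ↦ (t - u, -t - u)` passes through `(-2u, 0)` at `t = -u` and through `(x k, -2u - x k)` at
  -- `t = u + x k`; these are the entries of `P k` and `P (k + 1)` in positions `k` and `k + 1`.
  refine ⟨u, -u, u + x ⟨k, by omega⟩, hu, fun i => ?_, fun i => ?_⟩ <;> rw [hP]
  · split_ifs <;> first | rfl | omega | (rw [← hu, two_smul]; abel) | abel
  · split_ifs with _ _ hik <;>
      first
      | rfl
      | omega
      | (rw [hsum, ← hu, two_smul]; abel)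
      | (rw [show i = ⟨k, by omega⟩ from Fin.ext hik]; abel)

/-- Chain construction in the proof of Proposition 6.5: for a 2-divisible
abelian group `A` and a point `(x₀,…,xₙ)` of `A₀^{n+1}`, the intermediate
points `P_k` and `P_{k+1}` both lie on a common "Kummer surface" of the form
`t ↦ (x₀,…,x_{k−1}, t−u, −t−u, 0,…,0)` with `2u = x₀+⋯+x_{k−1}`. -/
theorem stmt_14
    (A : Type*) [AddCommGroup A]
    (hdiv : ∀ a : A, ∃ b : A, 2 • b = a)
    (n : ℕ) (hn : 1 ≤ n)
    (x : Fin (n + 1) → A) (hx : ∑ i, x i = 0)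
    (P : ℕ → Fin (n + 1) → A)
    (hP : ∀ k, ∀ i : Fin (n + 1), P k i =
      if (i : ℕ) < k then x i
      else if (i : ℕ) = k then
        -(∑ j ∈ Finset.univ.filter (fun j : Fin (n + 1) => (j : ℕ) < k), x j)
      else 0) :
    ∀ k, k < n → ∃ u t₁ t₂ : A,
      2 • u = (∑ j ∈ Finset.univ.filter (fun j : Fin (n + 1) => (j : ℕ) < k), x j) ∧
      (∀ i : Fin (n + 1), P k i =
        if (i : ℕ) < k then x i
        else if (i : ℕ) = k then t₁ - u
        else if (i : ℕ) = k + 1 then -t₁ - u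
        else 0) ∧
      (∀ i : Fin (n + 1), P (k + 1) i =
        if (i : ℕ) < k then x i
        else if (i : ℕ) = k then t₂ - u
        else if (i : ℕ) = k + 1 then -t₂ - u
        else 0) :=
  stmt_14_general A hdiv n x P hP
end
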